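/- Let r be a real number and k a nonnegative integer. For every real t with |t| < 1, one has (1/k!) · (t/2 + √(1 + t²/4))^{2r} · (2 log(t/2 + √(1 + t²/4)))^k = ∑_{n=k}^{∞} t_r(n+r, k+r) · t^n / n!, the series converging to the left-hand side. -/

import Mathlib

open Polynomial

/-- The polynomial `(X + r)^{[n]}`: the central factorial of `X + r`, i.e.
`(X+r)^{[0]} = 1` and `(X+r)^{[n]} = (X+r) ∏_{i=1}^{n-1} (X + r + n/2 - i)` for `n ≥ 1`. -/
noncomputable def centralFactorialPoly (r : ℝ) : ℕ → Polynomial ℝ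
  | 0 => 1
  | n + 1 => (X + C r) *
      ∏ i ∈ Finset.range n, (X + C r + C (((n : ℝ) + 1) / 2) - C ((i : ℝ) + 1))

/-- The extended `r`-central factorial numbers of the first kind `t_r(n+r, k+r)`, defined
as the coefficients in `(x+r)^{[n]} = ∑_{k=0}^{n} t_r(n+r, k+r) x^k`. -/
noncomputable def rcentralt (r : ℝ) (n k : ℕ) : ℝ :=
  (centralFactorialPoly r n).coeff k


open Real

namespace CFAux


lemma natDegree_cfp_le (r : ℝ) (n : ℕ) : (centralFactorialPoly r n).natDegree ≤ n := by
  cases n with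
  | zero => simp [centralFactorialPoly]
  | succ n =>
    rw [centralFactorialPoly]
    refine le_trans (natDegree_mul_le) ?_
    have h1 : (X + C r).natDegree ≤ 1 := le_of_eq (natDegree_X_add_C r)
    have h2 : (∏ i ∈ Finset.range n,
        (X + C r + C (((n : ℝ) + 1) / 2) - C ((i : ℝ) + 1))).natDegree ≤ n := by
      refine le_trans (natDegree_prod_le _ _) ?_
      refine le_trans (Finset.sum_le_sum (g := fun _ => 1) fun i _ => ?_) (by simp)
      have : X + C r + C (((n : ℝ) + 1) / 2) - C ((i : ℝ) + 1)
          = X + C (r + ((n : ℝ) + 1) / 2 - ((i : ℝ) + 1)) := by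
        simp only [C_add, C_sub]; abel
      rw [this, natDegree_X_add_C]
    omega

lemma rcentralt_eq_zero (r : ℝ) {n k : ℕ} (h : n < k) : rcentralt r n k = 0 :=
  Polynomial.coeff_eq_zero_of_natDegree_lt (lt_of_le_of_lt (natDegree_cfp_le r n) h)

lemma cfp_eval (r : ℝ) (n : ℕ) (x : ℝ) : (centralFactorialPoly r (n+1)).eval x =
    (x + r) * ∏ i ∈ Finset.range n, (x + r + ((n:ℝ)+1)/2 - ((i:ℝ)+1)) := by
  rw [centralFactorialPoly]
  simp [eval_prod]

lemma cfp_rec (r : ℝ) (n : ℕ) :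
    centralFactorialPoly r (n+2) =
      centralFactorialPoly r n * ((X + C r)^2 - C (((n:ℝ)/2)^2)) := by
  apply Polynomial.funext
  intro x
  rw [eval_mul]
  cases n with
  | zero =>
    rw [show (0:ℕ)+2 = 1+1 from rfl, cfp_eval]
    simp [centralFactorialPoly]
    ring
  | succ m =>
    rw [show m+1+2 = (m+2)+1 from rfl, cfp_eval, cfp_eval,
      Finset.prod_range_succ, Finset.prod_range_succ']
    have hmid : ∀ i ∈ Finset.range m,
        (x + r + (((m+2:ℕ):ℝ)+1)/2 - (((i+1:ℕ):ℝ)+1))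
          = (x + r + ((m:ℝ)+1)/2 - ((i:ℝ)+1)) := by
      intro i _
      push_cast
      ring
    rw [Finset.prod_congr rfl hmid]
    simp only [eval_sub, eval_pow, eval_add, eval_X, eval_C]
    push_cast
    ring


def pdown {α : Type*} [Zero α] (g : ℕ → α) : ℕ → α
  | 0 => 0
  | k + 1 => g k

lemma rcentralt_rec (r : ℝ) (n k : ℕ) :
    rcentralt r (n+2) k = pdown (pdown (rcentralt r n)) k
      + 2*r * pdown (rcentralt r n) k + (r^2 - ((n:ℝ)/2)^2) * rcentralt r n k := by
  unfold rcentralt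
  rw [cfp_rec]
  have hexp : (X + C r)^2 - C (((n:ℝ)/2)^2)
      = X^1 * X^1 + C (2*r) * X^1 + C (r^2 - ((n:ℝ)/2)^2) := by
    apply Polynomial.funext
    intro x
    simp
    ring
  rw [hexp, mul_add, mul_add]
  have h1 : centralFactorialPoly r n * (X^1 * X^1) = centralFactorialPoly r n * X^1 * X^1 := by
    ring
  have h2 : centralFactorialPoly r n * (C (2*r) * X^1)
      = C (2*r) * (centralFactorialPoly r n * X^1) := by ring
  have h3 : centralFactorialPoly r n * C (r^2 - ((n:ℝ)/2)^2)
      = C (r^2 - ((n:ℝ)/2)^2) * centralFactorialPoly r n := by ring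
  rw [h1, h2, h3, coeff_add, coeff_add, coeff_C_mul, coeff_C_mul]
  match k with
  | 0 => simp [coeff_mul_X_pow', pdown]
  | 1 => simp [coeff_mul_X_pow', pdown]
  | (k+2) => simp [coeff_mul_X_pow', pdown]

lemma exists_bound (r : ℝ) : ∃ K : ℝ, 0 < K ∧
    ∀ n k : ℕ, |rcentralt r n k| ≤ K * (3/5)^n * n.factorial := by
  set N : ℕ := ⌈4*(1+|r|)⌉₊ with hN
  set K : ℝ := 1 + ∑ n ∈ Finset.range (N+2), ∑ k ∈ Finset.range (N+2),
      |rcentralt r n k| / ((3/5)^n * n.factorial) with hK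
  have hK0 : 0 < K := by
    have : (0:ℝ) ≤ ∑ n ∈ Finset.range (N+2), ∑ k ∈ Finset.range (N+2),
        |rcentralt r n k| / ((3/5)^n * n.factorial) := by
      apply Finset.sum_nonneg; intro i _
      apply Finset.sum_nonneg; intro j _
      positivity
    rw [hK]
    linarith
  refine ⟨K, hK0, ?_⟩
  have hbase : ∀ n, n < N + 2 → ∀ k, |rcentralt r n k| ≤ K * (3/5)^n * n.factorial := by
    intro n hn k
    have hD : (0:ℝ) < (3/5)^n * n.factorial := by positivity
    rcases le_or_gt k n with hk | hk
    · have hkN : k < N + 2 := lt_of_le_of_lt hk hn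
      have h1 : |rcentralt r n k| / ((3/5)^n * n.factorial) ≤ K := by
        rw [hK]
        have hsum : |rcentralt r n k| / ((3/5)^n * n.factorial)
            ≤ ∑ n' ∈ Finset.range (N+2), ∑ k' ∈ Finset.range (N+2),
              |rcentralt r n' k'| / ((3/5)^n' * n'.factorial) := by
          have hin : n ∈ Finset.range (N+2) := Finset.mem_range.mpr hn
          have hik : k ∈ Finset.range (N+2) := Finset.mem_range.mpr hkN
          calc |rcentralt r n k| / ((3/5)^n * n.factorial)
              ≤ ∑ k' ∈ Finset.range (N+2), |rcentralt r n k'| / ((3/5)^n * n.factorial) :=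
                Finset.single_le_sum (f := fun k' => |rcentralt r n k'| / ((3/5)^n * n.factorial))
                  (fun i _ => by positivity) hik
            _ ≤ _ := Finset.single_le_sum
                  (f := fun n' => ∑ k' ∈ Finset.range (N+2),
                    |rcentralt r n' k'| / ((3/5)^n' * n'.factorial))
                  (fun i _ => Finset.sum_nonneg fun j _ => by positivity) hin
        linarith
      calc |rcentralt r n k| = |rcentralt r n k| / ((3/5)^n * n.factorial)
            * ((3/5)^n * n.factorial) := by field_simp
        _ ≤ K * ((3/5)^n * n.factorial) := by
            apply mul_le_mul_of_nonneg_right h1 (le_of_lt hD)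
        _ = K * (3/5)^n * n.factorial := by ring
    · rw [rcentralt_eq_zero r hk, abs_zero]; positivity
  intro n
  induction n using Nat.strong_induction_on with
  | _ n ih =>
    rcases lt_or_ge n (N+2) with hn | hn
    · exact hbase n hn
    · obtain ⟨m, rfl⟩ : ∃ m, n = m + 2 := ⟨n - 2, by omega⟩
      intro k
      have hNm : N ≤ m := by omega
      have hm4 : 4*(1+|r|) ≤ (m:ℝ) := by
        refine le_trans (Nat.le_ceil _) ?_
        exact_mod_cast Nat.cast_le.mpr hNm
      set D : ℝ := K * (3/5)^m * m.factorial with hD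
      have hD0 : 0 ≤ D := by positivity
      have B : ∀ k', |rcentralt r m k'| ≤ D := fun k' => ih m (by omega) k'
      have b1 : |pdown (pdown (rcentralt r m)) k| ≤ D := by
        match k with
        | 0 => simpa [pdown] using hD0
        | 1 => simpa [pdown] using hD0
        | (k+2) => exact B k
      have b2 : |pdown (rcentralt r m) k| ≤ D := by
        match k with
        | 0 => simpa [pdown] using hD0
        | (k+1) => exact B k
      rw [rcentralt_rec]
      have key : (1 + 2*|r| + (r^2 + ((m:ℝ)/2)^2)) ≤ (9/25) * ((m:ℝ)+1) * ((m:ℝ)+2) := by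
        nlinarith [abs_nonneg r, sq_nonneg (|r|), sq_abs r]
      calc |pdown (pdown (rcentralt r m)) k + 2*r * pdown (rcentralt r m) k
            + (r^2 - ((m:ℝ)/2)^2) * rcentralt r m k|
          ≤ |pdown (pdown (rcentralt r m)) k| + |2*r * pdown (rcentralt r m) k|
            + |(r^2 - ((m:ℝ)/2)^2) * rcentralt r m k| := abs_add_three _ _ _
        _ ≤ D + 2*|r| * D + (r^2 + ((m:ℝ)/2)^2) * D := by
            have e2 : |2*r * pdown (rcentralt r m) k| ≤ 2*|r| * D := by
              rw [abs_mul]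
              have : |2*r| = 2*|r| := by rw [abs_mul]; simp
              rw [this]
              exact mul_le_mul_of_nonneg_left b2 (by positivity)
            have e3 : |(r^2 - ((m:ℝ)/2)^2) * rcentralt r m k| ≤ (r^2 + ((m:ℝ)/2)^2) * D := by
              rw [abs_mul]
              have habs : |r^2 - ((m:ℝ)/2)^2| ≤ r^2 + ((m:ℝ)/2)^2 := by
                calc |r^2 - ((m:ℝ)/2)^2| ≤ |r^2| + |((m:ℝ)/2)^2| := abs_sub _ _
                  _ = r^2 + ((m:ℝ)/2)^2 := by
                      rw [abs_of_nonneg (sq_nonneg r), abs_of_nonneg (sq_nonneg _)]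
              exact mul_le_mul habs (B k) (abs_nonneg _) (by positivity)
            linarith
        _ = (1 + 2*|r| + (r^2 + ((m:ℝ)/2)^2)) * D := by ring
        _ ≤ ((9/25) * ((m:ℝ)+1) * ((m:ℝ)+2)) * D :=
            mul_le_mul_of_nonneg_right key hD0
        _ = K * (3/5)^(m+2) * (m+2).factorial := by
            rw [hD]
            push_cast [Nat.factorial_succ]
            ring

open Real

noncomputable def qc (r : ℝ) (k n : ℕ) : ℝ := rcentralt r n k / n.factorial

noncomputable def Sc (r : ℝ) (k : ℕ) (t : ℝ) : ℝ := ∑' n, qc r k n * t ^ n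
noncomputable def Dc (r : ℝ) (k : ℕ) (t : ℝ) : ℝ := ∑' n, qc r k n * ((n:ℝ) * t ^ (n-1))
noncomputable def D2c (r : ℝ) (k : ℕ) (t : ℝ) : ℝ :=
  ∑' n, qc r k n * ((n:ℝ) * (((n-1:ℕ):ℝ) * t ^ (n-1-1)))

section Analytic

variable {r K : ℝ} (hK0 : 0 < K)
  (hK : ∀ n k : ℕ, |rcentralt r n k| ≤ K * (3/5)^n * n.factorial)

include hK0 hK

lemma qc_bound : ∀ k n, |qc r k n| ≤ K * (3/5)^n := by
  intro k n
  have hf : (0:ℝ) < n.factorial := by positivity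
  rw [qc, abs_div, abs_of_pos hf, div_le_iff₀ hf]
  calc |rcentralt r n k| ≤ K * (3/5)^n * n.factorial := hK n k
    _ = K * (3/5)^n * n.factorial := rfl

lemma summable_Sc (k : ℕ) {t : ℝ} (h : |t| ≤ 4/3) :
    Summable (fun n => qc r k n * t ^ n) := by
  refine Summable.of_norm_bounded (g := fun n => K * (4/5)^n)
    ((summable_geometric_of_lt_one (by norm_num) (by norm_num)).mul_left K) (fun n => ?_)
  rw [norm_mul, norm_pow]
  calc ‖qc r k n‖ * ‖t‖^n ≤ (K * (3/5)^n) * (4/3)^n := by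
        apply mul_le_mul (qc_bound hK0 hK k n) (pow_le_pow_left₀ (norm_nonneg t) h n)
          (by positivity) (by positivity)
    _ = K * (4/5)^n := by rw [mul_assoc, ← mul_pow]; norm_num

lemma summable_aux1 : Summable (fun n : ℕ => K * ((n:ℝ) * (4/5)^n)) := by
  have := summable_pow_mul_geometric_of_norm_lt_one (R := ℝ) 1 (r := 4/5) (by norm_num)
  simpa [pow_one] using this.mul_left K

lemma summable_aux2 : Summable (fun n : ℕ => K * ((n:ℝ)^2 * (4/5)^n)) := by
  exact (summable_pow_mul_geometric_of_norm_lt_one (R := ℝ) 2 (r := 4/5)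
    (by norm_num)).mul_left K

lemma Dc_norm_bound (k : ℕ) (n : ℕ) {y : ℝ} (hy : |y| ≤ 4/3) :
    ‖qc r k n * ((n:ℝ) * y ^ (n-1))‖ ≤ K * ((n:ℝ) * (4/5)^n) := by
  rw [norm_mul, norm_mul, norm_pow]
  have h1 : ‖y‖^(n-1) ≤ (4/3)^n := by
    calc ‖y‖^(n-1) ≤ (4/3)^(n-1) := pow_le_pow_left₀ (norm_nonneg y) hy _
      _ ≤ (4/3)^n := pow_le_pow_right₀ (by norm_num) (Nat.sub_le n 1)
  have h2 : ‖(n:ℝ)‖ = (n:ℝ) := by simp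
  calc ‖qc r k n‖ * (‖(n:ℝ)‖ * ‖y‖^(n-1)) ≤ (K * (3/5)^n) * ((n:ℝ) * (4/3)^n) := by
        rw [h2]
        apply mul_le_mul (qc_bound hK0 hK k n) (by
          apply mul_le_mul_of_nonneg_left h1 (by positivity)) (by positivity) (by positivity)
    _ = K * ((n:ℝ) * (4/5)^n) := by
        rw [show (4/5:ℝ)^n = ((3/5)*(4/3))^n by norm_num, mul_pow]; ring

lemma D2c_norm_bound (k : ℕ) (n : ℕ) {y : ℝ} (hy : |y| ≤ 4/3) :
    ‖qc r k n * ((n:ℝ) * (((n-1:ℕ):ℝ) * y ^ (n-1-1)))‖ ≤ K * ((n:ℝ)^2 * (4/5)^n) := by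
  rw [norm_mul, norm_mul, norm_mul, norm_pow]
  have h1 : ‖y‖^(n-1-1) ≤ (4/3)^n := by
    calc ‖y‖^(n-1-1) ≤ (4/3)^(n-1-1) := pow_le_pow_left₀ (norm_nonneg y) hy _
      _ ≤ (4/3)^n := pow_le_pow_right₀ (by norm_num) (by omega)
  have h3 : ‖((n-1:ℕ):ℝ)‖ ≤ (n:ℝ) := by
    rw [Real.norm_natCast]; exact_mod_cast Nat.sub_le n 1
  calc ‖qc r k n‖ * (‖(n:ℝ)‖ * (‖((n-1:ℕ):ℝ)‖ * ‖y‖^(n-1-1)))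
      ≤ (K * (3/5)^n) * ((n:ℝ) * ((n:ℝ) * (4/3)^n)) := by
        apply mul_le_mul (qc_bound hK0 hK k n) ?_ (by positivity) (by positivity)
        rw [show ‖(n:ℝ)‖ = (n:ℝ) by simp]
        apply mul_le_mul_of_nonneg_left ?_ (Nat.cast_nonneg n)
        apply mul_le_mul h3 h1 (by positivity) (Nat.cast_nonneg n)
    _ = K * ((n:ℝ)^2 * (4/5)^n) := by
        rw [show (4/5:ℝ)^n = ((3/5)*(4/3))^n by norm_num, mul_pow]; ring

lemma hasDerivAt_Sc (k : ℕ) {t : ℝ} (h : |t| < 4/3) :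
    HasDerivAt (Sc r k) (Dc r k t) t := by
  have hball : t ∈ Metric.ball (0:ℝ) (4/3) := by
    simpa [Real.dist_eq] using h
  exact hasDerivAt_tsum_of_isPreconnected (summable_aux1 hK0 hK)
    Metric.isOpen_ball (convex_ball _ _).isPreconnected
    (fun n y _ => (hasDerivAt_pow n y).const_mul (qc r k n))
    (fun n y hy => Dc_norm_bound hK0 hK k n
      (le_of_lt (by simpa [Real.dist_eq] using hy)))
    (Metric.mem_ball_self (by norm_num))
    (by
      apply summable_of_ne_finset_zero (s := {0})
      intro n hn
      simp at hn
      simp [zero_pow hn])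
    hball

lemma hasDerivAt_Dc (k : ℕ) {t : ℝ} (h : |t| < 4/3) :
    HasDerivAt (Dc r k) (D2c r k t) t := by
  have hball : t ∈ Metric.ball (0:ℝ) (4/3) := by
    simpa [Real.dist_eq] using h
  exact hasDerivAt_tsum_of_isPreconnected (summable_aux2 hK0 hK)
    Metric.isOpen_ball (convex_ball _ _).isPreconnected
    (fun n y _ => ((hasDerivAt_pow (n-1) y).const_mul ((n:ℝ))).const_mul (qc r k n))
    (fun n y hy => D2c_norm_bound hK0 hK k n
      (le_of_lt (by simpa [Real.dist_eq] using hy)))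
    (Metric.mem_ball_self (by norm_num))
    (by
      apply summable_of_ne_finset_zero (s := {0, 1})
      intro n hn
      simp at hn
      obtain ⟨m, rfl⟩ : ∃ m, n = m + 2 := ⟨n - 2, by omega⟩
      simp [zero_pow])
    hball

end Analytic

lemma pdown_qc (r : ℝ) (k m : ℕ) :
    pdown (qc r) k m = pdown (rcentralt r m) k / m.factorial := by
  cases k <;> simp [pdown, qc]

lemma pdown_pdown_qc (r : ℝ) (k m : ℕ) :
    pdown (pdown (qc r)) k m = pdown (pdown (rcentralt r m)) k / m.factorial := by
  match k with
  | 0 => simp [pdown]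
  | 1 => simp [pdown]
  | (k+2) => simp [pdown, qc]

lemma qc_rec (r : ℝ) (k m : ℕ) :
    qc r k (m+2) * (((m+2:ℕ):ℝ) * ((m+1:ℕ):ℝ)) + (((m:ℝ) * ((m-1:ℕ):ℝ) + (m:ℝ))/4) * qc r k m
      = r^2 * qc r k m + 2*r * pdown (qc r) k m + pdown (pdown (qc r)) k m := by
  have h := rcentralt_rec r m k
  rw [qc, qc, pdown_qc, pdown_pdown_qc, h]
  have hfact : ((m+2).factorial : ℝ) = ((m+2:ℕ):ℝ) * ((m+1:ℕ):ℝ) * m.factorial := by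
    rw [Nat.factorial_succ, Nat.factorial_succ]
    push_cast
    ring
  have hf0 : (m.factorial : ℝ) ≠ 0 := by positivity
  rw [hfact]
  cases m with
  | zero => push_cast; field_simp; ring
  | succ m' =>
    have hm1 : ((m'+1-1:ℕ):ℝ) = ((m'+1:ℕ):ℝ) - 1 := by push_cast; ring
    rw [hm1]
    field_simp
    push_cast
    ring


section Analytic2

variable {r K : ℝ} (hK0 : 0 < K)
  (hK : ∀ n k : ℕ, |rcentralt r n k| ≤ K * (3/5)^n * n.factorial)

include hK0 hK

lemma hasSum_Sc (k : ℕ) {t : ℝ} (h : |t| ≤ 4/3) :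
    HasSum (fun n => qc r k n * t ^ n) (Sc r k t) := (summable_Sc hK0 hK k h).hasSum

lemma hasSum_pdown_Sc (k : ℕ) {t : ℝ} (h : |t| ≤ 4/3) :
    HasSum (fun n => pdown (qc r) k n * t ^ n) (pdown (Sc r) k t) := by
  cases k with
  | zero => simpa [pdown] using (hasSum_zero (α := ℝ) (β := ℕ))
  | succ k => exact hasSum_Sc hK0 hK k h

lemma hasSum_pdown_pdown_Sc (k : ℕ) {t : ℝ} (h : |t| ≤ 4/3) :
    HasSum (fun n => pdown (pdown (qc r)) k n * t ^ n) (pdown (pdown (Sc r)) k t) := by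
  match k with
  | 0 => simpa [pdown] using (hasSum_zero (α := ℝ) (β := ℕ))
  | 1 => simpa [pdown] using (hasSum_zero (α := ℝ) (β := ℕ))
  | (k+2) => exact hasSum_Sc hK0 hK k h

lemma hasSum_Dc (k : ℕ) {t : ℝ} (h : |t| ≤ 4/3) :
    HasSum (fun n => qc r k n * ((n:ℝ) * t ^ (n-1))) (Dc r k t) :=
  (Summable.of_norm_bounded (summable_aux1 hK0 hK)
    (fun n => Dc_norm_bound hK0 hK k n h)).hasSum

lemma hasSum_D2c (k : ℕ) {t : ℝ} (h : |t| ≤ 4/3) :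
    HasSum (fun n => qc r k n * ((n:ℝ) * (((n-1:ℕ):ℝ) * t ^ (n-1-1)))) (D2c r k t) :=
  (Summable.of_norm_bounded (summable_aux2 hK0 hK)
    (fun n => D2c_norm_bound hK0 hK k n h)).hasSum

lemma ode_Sc (k : ℕ) {t : ℝ} (h : |t| ≤ 4/3) :
    (1 + t^2/4) * D2c r k t + (t/4) * Dc r k t
      = r^2 * Sc r k t + 2*r * pdown (Sc r) k t + pdown (pdown (Sc r)) k t := by
  have hD2 := hasSum_D2c hK0 hK k h
  have hD := hasSum_Dc hK0 hK k h
  have hS := hasSum_Sc hK0 hK k h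
  have hSp := hasSum_pdown_Sc hK0 hK k h
  have hSpp := hasSum_pdown_pdown_Sc hK0 hK k h
  have h1 : HasSum (fun m => qc r k (m+2) * (((m+2:ℕ):ℝ) * (((m+1:ℕ):ℝ) * t^m)))
      (D2c r k t) := by
    have hinj : Function.Injective (fun m : ℕ => m + 2) := fun a b hab => by simpa using hab
    have hvan : ∀ n ∉ Set.range (fun m : ℕ => m + 2),
        qc r k n * ((n:ℝ) * (((n-1:ℕ):ℝ) * t ^ (n-1-1))) = 0 := by
      intro n hn
      match n with
      | 0 => simp
      | 1 => simp
      | (m+2) => exact absurd ⟨m, rfl⟩ hn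
    exact (Function.Injective.hasSum_iff hinj hvan).2 hD2
  have h2 : HasSum (fun n => qc r k n * ((n:ℝ) * (((n-1:ℕ):ℝ) * t^n))) (t^2 * D2c r k t) := by
    have hh := hD2.mul_left (t^2)
    have e : (fun n => t^2 * (qc r k n * ((n:ℝ) * (((n-1:ℕ):ℝ) * t ^ (n-1-1)))))
        = fun n => qc r k n * ((n:ℝ) * (((n-1:ℕ):ℝ) * t^n)) := by
      funext n
      match n with
      | 0 => simp
      | 1 => simp
      | (m+2) =>
        show t^2 * (_ * (_ * (_ * t^m))) = _ * (_ * (_ * t^(m+2)))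
        rw [pow_add]
        ring
    rwa [e] at hh
  have h3 : HasSum (fun n => qc r k n * ((n:ℝ) * t^n)) (t * Dc r k t) := by
    have hh := hD.mul_left t
    have e : (fun n => t * (qc r k n * ((n:ℝ) * t ^ (n-1))))
        = fun n => qc r k n * ((n:ℝ) * t^n) := by
      funext n
      match n with
      | 0 => simp
      | (m+1) =>
        show t * (_ * (_ * t^m)) = _ * (_ * t^(m+1))
        rw [pow_succ]
        ring
    rwa [e] at hh
  have L := h1.add ((h2.mul_left (1/4)).add (h3.mul_left (1/4)))
  have R := (hS.mul_left (r^2)).add ((hSp.mul_left (2*r)).add hSpp)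
  have hterm : (fun m => qc r k (m+2) * (((m+2:ℕ):ℝ) * (((m+1:ℕ):ℝ) * t^m))
        + (1/4 * (qc r k m * ((m:ℝ) * (((m-1:ℕ):ℝ) * t^m)))
          + 1/4 * (qc r k m * ((m:ℝ) * t^m))))
      = fun m => r^2 * (qc r k m * t^m)
        + (2*r * (pdown (qc r) k m * t^m) + pdown (pdown (qc r)) k m * t^m) := by
    funext m
    have hqr := qc_rec r k m
    linear_combination t^m * hqr
  rw [hterm] at L
  have hLR := L.unique R
  linarith [hLR]

end Analytic2

noncomputable def Lg (t : ℝ) : ℝ := Real.log (t/2 + Real.sqrt (1 + t^2/4))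
noncomputable def wc (t : ℝ) : ℝ := Real.sqrt (1 + t^2/4)
noncomputable def fc (r : ℝ) (k : ℕ) (t : ℝ) : ℝ :=
  Real.exp (2*r*Lg t) * (2 * Lg t)^k / (Nat.factorial k)

lemma wc_pos (t : ℝ) : 0 < wc t := Real.sqrt_pos.2 (by positivity)

lemma wc_sq (t : ℝ) : wc t ^ 2 = 1 + t^2/4 := Real.sq_sqrt (by positivity)

lemma u_pos (t : ℝ) : 0 < t/2 + Real.sqrt (1 + t^2/4) := by
  have h : |t|/2 < Real.sqrt (1 + t^2/4) := by
    rw [show |t|/2 = Real.sqrt ((|t|/2)^2) from (Real.sqrt_sq (by positivity)).symm]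
    apply Real.sqrt_lt_sqrt (by positivity)
    have e : (|t|/2)^2 = t^2/4 := by rw [div_pow, sq_abs]; norm_num
    rw [e]; linarith
  have h2 := neg_abs_le t
  linarith

lemma u_eq (t : ℝ) : t/2 + Real.sqrt (1 + t^2/4) = t/2 + wc t := rfl

lemma hasDerivAt_wc (t : ℝ) : HasDerivAt wc (t / (4 * wc t)) t := by
  have h1 : HasDerivAt (fun t : ℝ => 1 + t^2/4) (t/2) t := by
    have h0 : HasDerivAt (fun t : ℝ => t^2) (2*t) t := by simpa using hasDerivAt_pow 2 t
    refine ((h0.div_const 4).const_add 1).congr_deriv (Eq.symm ?_)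
    ring
  have h2 := (Real.hasDerivAt_sqrt (by positivity : (1 + t^2/4) ≠ 0)).comp t h1
  refine h2.congr_deriv (Eq.symm ?_)
  have hw := wc_pos t
  rw [show Real.sqrt (1 + t^2/4) = wc t from rfl]
  field_simp
  ring

lemma hasDerivAt_Lg (t : ℝ) : HasDerivAt Lg (1/(2 * wc t)) t := by
  have hu : HasDerivAt (fun t : ℝ => t/2 + Real.sqrt (1+t^2/4)) (1/2 + t/(4*wc t)) t :=
    ((hasDerivAt_id t).div_const 2).add (hasDerivAt_wc t)
  have h2 := (Real.hasDerivAt_log (ne_of_gt (u_pos t))).comp t hu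
  refine h2.congr_deriv (Eq.symm ?_)
  have hw := wc_pos t
  have hu0 := u_pos t
  rw [u_eq] at hu0 ⊢
  have hw' : wc t ≠ 0 := hw.ne'
  have hu0' : t/2 + wc t ≠ 0 := hu0.ne'
  have e1 : 1/2 + t/(4*wc t) = (t/2 + wc t)/(2*wc t) := by
    field_simp
    ring
  rw [e1, ← mul_div_assoc, inv_mul_cancel₀ hu0']

lemma hasDerivAt_fc (r : ℝ) (k : ℕ) (t : ℝ) :
    HasDerivAt (fc r k) ((r * fc r k t + pdown (fc r) k t) / wc t) t := by
  have hL := hasDerivAt_Lg t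
  have hE : HasDerivAt (fun t : ℝ => Real.exp (2*r*Lg t))
      (Real.exp (2*r*Lg t) * (2*r*(1/(2*wc t)))) t := (hL.const_mul (2*r)).exp
  have hP : HasDerivAt (fun t : ℝ => (2 * Lg t)^k)
      ((k:ℝ) * (2*Lg t)^(k-1) * (2 * (1/(2*wc t)))) t := (hL.const_mul 2).pow k
  have h := (hE.mul hP).div_const (Nat.factorial k)
  refine h.congr_deriv (Eq.symm ?_)
  have hw := (wc_pos t).ne'
  match k with
  | 0 =>
    simp [fc, pdown]
    ring
  | (k+1) =>
    show (r * fc r (k+1) t + fc r k t) / wc t = _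
    rw [fc, fc]
    have hfa : ((k+1).factorial : ℝ) = (k+1) * k.factorial := by
      rw [Nat.factorial_succ]; push_cast; ring
    rw [hfa]
    have hf0 : (k.factorial : ℝ) ≠ 0 := by positivity
    field_simp
    push_cast
    ring

lemma hasDerivAt_pdown_fc (r : ℝ) (k : ℕ) (t : ℝ) :
    HasDerivAt (pdown (fc r) k)
      ((r * pdown (fc r) k t + pdown (pdown (fc r)) k t) / wc t) t := by
  cases k with
  | zero =>
    have : HasDerivAt (fun _ : ℝ => (0:ℝ)) 0 t := hasDerivAt_const t 0
    simpa [pdown] using this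
  | succ k => exact hasDerivAt_fc r k t

lemma hasDerivAt_G2 (r : ℝ) (k : ℕ) (t : ℝ) :
    HasDerivAt (fun t => (r * fc r k t + pdown (fc r) k t) / wc t)
      ((r^2 * fc r k t + 2*r * pdown (fc r) k t + pdown (pdown (fc r)) k t
        - (t/4) * ((r * fc r k t + pdown (fc r) k t) / wc t)) / (1 + t^2/4)) t := by
  have hN : HasDerivAt (fun t => r * fc r k t + pdown (fc r) k t)
      (r * ((r * fc r k t + pdown (fc r) k t) / wc t)
        + (r * pdown (fc r) k t + pdown (pdown (fc r)) k t) / wc t) t :=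
    ((hasDerivAt_fc r k t).const_mul r).add (hasDerivAt_pdown_fc r k t)
  have h := hN.div (hasDerivAt_wc t) (wc_pos t).ne'
  refine h.congr_deriv (Eq.symm ?_)
  have hw := wc_pos t
  have hsq := wc_sq t
  rw [← hsq]
  have hw' : wc t ≠ 0 := hw.ne'
  field_simp
  ring




lemma rcentralt_zero (r : ℝ) (k : ℕ) : rcentralt r 0 k = if k = 0 then 1 else 0 := by
  simp [rcentralt, centralFactorialPoly, coeff_one]

lemma rcentralt_one (r : ℝ) (k : ℕ) :
    rcentralt r 1 k = if k = 0 then r else if k = 1 then 1 else 0 := by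
  have : centralFactorialPoly r 1 = X + C r := by
    rw [centralFactorialPoly]; simp
  rw [rcentralt, this]
  match k with
  | 0 => simp
  | 1 => simp [coeff_X, coeff_C]
  | (k+2) => simp [coeff_X, coeff_C]

lemma Sc_zero (r : ℝ) (k : ℕ) : Sc r k 0 = if k = 0 then 1 else 0 := by
  rw [Sc, tsum_eq_single 0 (fun n hn => by simp [zero_pow hn])]
  simp [qc, rcentralt_zero]

lemma Dc_zero (r : ℝ) (k : ℕ) :
    Dc r k 0 = if k = 0 then r else if k = 1 then 1 else 0 := by
  rw [Dc, tsum_eq_single 1 (fun n hn => ?_)]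
  · simp [qc, rcentralt_one]
  · match n with
    | 0 => simp
    | (m+2) => simp [zero_pow]

lemma Lg_zero : Lg 0 = 0 := by
  simp [Lg]

lemma wc_zero : wc 0 = 1 := by
  simp [wc]

lemma fc_zero (r : ℝ) (k : ℕ) : fc r k 0 = if k = 0 then 1 else 0 := by
  rw [fc, Lg_zero]
  match k with
  | 0 => simp
  | (k+1) => simp [zero_pow]

noncomputable def vode (r : ℝ) (k : ℕ) : ℝ → ℝ × ℝ → ℝ × ℝ := fun τ p =>
  (p.2, (r^2 * p.1 + 2*r * pdown (fc r) k τ + pdown (pdown (fc r)) k τ - (τ/4) * p.2)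
    / (1 + τ^2/4))

lemma lipschitz_vode (r : ℝ) (k : ℕ) (τ : ℝ) :
    LipschitzWith ((r^2+1 : ℝ).toNNReal) (vode r k τ) := by
  apply LipschitzWith.of_dist_le_mul
  intro p q
  have hM0 : (0:ℝ) ≤ dist p q := dist_nonneg
  have hd1 : |p.1 - q.1| ≤ dist p q := by
    rw [Prod.dist_eq]
    exact le_trans (le_of_eq (Real.dist_eq _ _).symm) (le_max_left _ _)
  have hd2 : |p.2 - q.2| ≤ dist p q := by
    rw [Prod.dist_eq]
    exact le_trans (le_of_eq (Real.dist_eq _ _).symm) (le_max_right _ _)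
  have hcoe : (((r^2+1 : ℝ).toNNReal) : ℝ) = r^2+1 := Real.coe_toNNReal _ (by positivity)
  rw [Prod.dist_eq, hcoe]
  have hpos : (0:ℝ) < 1 + τ^2/4 := by positivity
  apply max_le
  · rw [vode, vode, Real.dist_eq]
    exact hd2.trans (by nlinarith [sq_nonneg r])
  · rw [vode, vode, Real.dist_eq]
    have ediff : (r^2 * p.1 + 2*r * pdown (fc r) k τ + pdown (pdown (fc r)) k τ
          - (τ/4) * p.2) / (1 + τ^2/4)
        - (r^2 * q.1 + 2*r * pdown (fc r) k τ + pdown (pdown (fc r)) k τ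
          - (τ/4) * q.2) / (1 + τ^2/4)
        = (r^2 * (p.1 - q.1) - (τ/4) * (p.2 - q.2)) / (1 + τ^2/4) := by
      ring
    rw [ediff, abs_div, abs_of_pos hpos, div_le_iff₀ hpos]
    have habs : |r^2 * (p.1 - q.1) - (τ/4) * (p.2 - q.2)|
        ≤ r^2 * |p.1 - q.1| + (|τ|/4) * |p.2 - q.2| := by
      calc |r^2 * (p.1 - q.1) - (τ/4) * (p.2 - q.2)|
          ≤ |r^2 * (p.1 - q.1)| + |(τ/4) * (p.2 - q.2)| := abs_sub _ _
        _ = r^2 * |p.1 - q.1| + (|τ|/4) * |p.2 - q.2| := by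
            rw [abs_mul, abs_mul, abs_of_nonneg (sq_nonneg r)]
            congr 2
            rw [abs_div]
            norm_num
    have hτ : |τ| ≤ 1 + τ^2/4 := by nlinarith [sq_nonneg (1 - |τ|/2), sq_abs τ]
    have e1 : r^2 * |p.1 - q.1| ≤ r^2 * dist p q * (1 + τ^2/4) := by
      nlinarith [mul_le_mul_of_nonneg_left hd1 (sq_nonneg r),
        mul_nonneg (mul_nonneg (sq_nonneg r) hM0) (by positivity : (0:ℝ) ≤ τ^2/4)]
    have e2 : (|τ|/4) * |p.2 - q.2| ≤ dist p q * (1 + τ^2/4) := by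
      nlinarith [mul_le_mul_of_nonneg_right hτ (abs_nonneg (p.2 - q.2)),
        mul_le_mul_of_nonneg_left hd2 (le_of_lt hpos), abs_nonneg τ, abs_nonneg (p.2 - q.2)]
    nlinarith [e1, e2, habs, sq_nonneg r]

section Main
variable {r K : ℝ} (hK0 : 0 < K)
  (hK : ∀ n k : ℕ, |rcentralt r n k| ≤ K * (3/5)^n * n.factorial)
include hK0 hK

lemma Sc_eq_fc : ∀ k : ℕ, ∀ t : ℝ, |t| < 1 → Sc r k t = fc r k t := by
  intro k
  induction k using Nat.strong_induction_on with
  | _ k ih =>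
    intro t ht
    have huniq : Set.EqOn (fun τ => (Sc r k τ, Dc r k τ))
        (fun τ => (fc r k τ, (r * fc r k τ + pdown (fc r) k τ) / wc τ))
        (Set.Ioo (-1:ℝ) 1) := by
      apply ODE_solution_unique_of_mem_Ioo (v := vode r k) (s := fun _ => Set.univ)
        (K := (r^2+1 : ℝ).toNNReal) (t₀ := (0:ℝ))
        (fun τ _ => (lipschitz_vode r k τ).lipschitzOnWith (s := Set.univ))
        (Set.mem_Ioo.mpr ⟨by norm_num, by norm_num⟩)
      · -- F solves
        intro τ hτ
        obtain ⟨hτ1, hτ2⟩ := Set.mem_Ioo.mp hτ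
        have hτ1' : |τ| < 1 := abs_lt.mpr ⟨hτ1, hτ2⟩
        have hτ43 : |τ| < 4/3 := hτ1'.trans_le (by norm_num)
        refine ⟨?_, trivial⟩
        have hd := (hasDerivAt_Sc hK0 hK k hτ43).prodMk (hasDerivAt_Dc hK0 hK k hτ43)
        have hps : pdown (fc r) k τ = pdown (Sc r) k τ := by
          cases k with
          | zero => rfl
          | succ k => exact (ih k (Nat.lt_succ_self k) τ hτ1').symm
        have hpps : pdown (pdown (fc r)) k τ = pdown (pdown (Sc r)) k τ := by
          match k with
          | 0 => rfl
          | 1 => rfl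
          | (k+2) => exact (ih k (by omega) τ hτ1').symm
        have hode := ode_Sc hK0 hK k (le_of_lt hτ43)
        have hval : vode r k τ (Sc r k τ, Dc r k τ) = (Dc r k τ, D2c r k τ) := by
          rw [vode]
          refine Prod.ext rfl ?_
          show (r^2 * Sc r k τ + 2*r * pdown (fc r) k τ + pdown (pdown (fc r)) k τ
            - (τ/4) * Dc r k τ) / (1 + τ^2/4) = D2c r k τ
          rw [hps, hpps, div_eq_iff (by positivity : (1:ℝ) + τ^2/4 ≠ 0)]
          linarith [hode]
        rw [hval]
        exact hd
      · -- G solves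
        intro τ hτ
        exact ⟨(hasDerivAt_fc r k τ).prodMk (hasDerivAt_G2 r k τ), trivial⟩
      · -- initial values
        have h1 : Sc r k 0 = fc r k 0 := by rw [Sc_zero, fc_zero]
        have h2 : Dc r k 0 = (r * fc r k 0 + pdown (fc r) k 0) / wc 0 := by
          rw [Dc_zero, wc_zero]
          match k with
          | 0 => show (r:ℝ) = (r * fc r 0 0 + 0) / 1; rw [fc_zero]; norm_num
          | 1 => show (1:ℝ) = (r * fc r 1 0 + fc r 0 0) / 1; rw [fc_zero, fc_zero]; norm_num
          | (k+2) =>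
            show (0:ℝ) = (r * fc r (k+2) 0 + fc r (k+1) 0) / 1
            rw [fc_zero, fc_zero]
            norm_num
        exact Prod.ext h1 h2
    have := huniq (Set.mem_Ioo.mpr (abs_lt.mp ht))
    exact congrArg Prod.fst this

end Main


end CFAux

open CFAux in
/-- For a real `r`, a nonnegative integer `k`, and a real `t` with `|t| < 1`:
`(1/k!) (t/2 + √(1 + t²/4))^{2r} (2 log(t/2 + √(1 + t²/4)))^k = ∑_{n=k}^{∞} t_r(n+r,k+r) t^n / n!`,
the series converging to the left-hand side. -/
theorem hasSum_rcentralt (r : ℝ) (k : ℕ) (t : ℝ) (ht : |t| < 1) :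
    HasSum (fun n : ℕ => rcentralt r (n + k) k * t ^ (n + k) / (Nat.factorial (n + k) : ℝ))
      ((1 / (Nat.factorial k : ℝ)) *
        (t / 2 + Real.sqrt (1 + t ^ 2 / 4)) ^ (2 * r) *
        (2 * Real.log (t / 2 + Real.sqrt (1 + t ^ 2 / 4))) ^ k) := by
  obtain ⟨K, hK0, hK⟩ := exists_bound r
  have ht43 : |t| ≤ 4/3 := le_of_lt (ht.trans_le (by norm_num))
  have hS := hasSum_Sc hK0 hK k ht43
  rw [Sc_eq_fc hK0 hK k t ht] at hS
  have hinj : Function.Injective (fun n : ℕ => n + k) := fun a b hab => by simpa using hab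
  have hvan : ∀ n ∉ Set.range (fun m : ℕ => m + k), qc r k n * t ^ n = 0 := by
    intro n hn
    have hnk : n < k := by
      by_contra hc
      exact hn ⟨n - k, show n - k + k = n by omega⟩
    rw [qc, rcentralt_eq_zero r hnk]
    simp
  have h2 := (Function.Injective.hasSum_iff hinj hvan).2 hS
  have e : ((fun n => qc r k n * t ^ n) ∘ fun n : ℕ => n + k)
      = fun n : ℕ => rcentralt r (n + k) k * t ^ (n + k) / (Nat.factorial (n + k) : ℝ) := by
    funext n
    show qc r k (n + k) * t ^ (n + k) = _
    rw [qc]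
    ring
  rw [e] at h2
  have etarget : fc r k t = (1 / (Nat.factorial k : ℝ)) *
      (t / 2 + Real.sqrt (1 + t ^ 2 / 4)) ^ (2 * r) *
      (2 * Real.log (t / 2 + Real.sqrt (1 + t ^ 2 / 4))) ^ k := by
    rw [Real.rpow_def_of_pos (u_pos t)]
    simp only [fc, Lg]
    rw [mul_comm (Real.log (t/2 + Real.sqrt (1 + t^2/4))) (2*r)]
    ring
  rwa [etarget] at h2
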